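/- arXiv:1608.08843 — 7 statements merged into one kernel-verified Lean document; each statement's English description precedes it below -/
import Mathlib

section
/- For every d ≥ 2, the standard example S_d (the poset on 2d points a_1,…,a_d,b_1,…,b_d where a_i < b_j iff i ≠ j, and no other strict comparabilities) has order dimension exactly d. -/
variable {α : Type*}

/-- A linear extension of a partial order, given as a binary relation. -/
def IsLinExt [PartialOrder α] (r : α → α → Prop) : Prop :=
  IsLinearOrder α r ∧ ∀ x y : α, x ≤ y → r x y

/-- A realizer: a family of linear extensions whose intersection is the order. -/
def IsRealizer [PartialOrder α] {d : ℕ} (L : Fin d → α → α → Prop) : Prop :=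
  (∀ i, IsLinExt (L i)) ∧ ∀ x y : α, x ≤ y ↔ ∀ i, L i x y

/-- The order dimension of a poset: the least positive `d` admitting a realizer of size `d`. -/
noncomputable def pdim (α : Type*) [PartialOrder α] : ℕ :=
  sInf {d | 0 < d ∧ ∃ L : Fin d → α → α → Prop, IsRealizer L}

/-- The set of (ordered) incomparable pairs of a poset. -/
def IncPairs (α : Type*) [PartialOrder α] : Set (α × α) :=
  {p | ¬ p.1 ≤ p.2 ∧ ¬ p.2 ≤ p.1}

/-- `r` reverses every pair `(x, y)` in `S`, i.e. `x > y` in `r`. -/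
def Reverses [PartialOrder α] (r : α → α → Prop) (S : Set (α × α)) : Prop :=
  ∀ p ∈ S, r p.2 p.1 ∧ ¬ r p.1 p.2

/-- A set of incomparable pairs is reversible if some linear extension reverses all of them. -/
def Reversible [PartialOrder α] (S : Set (α × α)) : Prop :=
  ∃ r, IsLinExt r ∧ Reverses r S

/-- `d` linear extensions suffice to reverse every pair of `S` (i.e. `dim S ≤ d`). -/
def RealizerOn [PartialOrder α] (d : ℕ) (S : Set (α × α)) : Prop :=
  ∃ L : Fin d → α → α → Prop, (∀ i, IsLinExt (L i)) ∧
    ∀ p ∈ S, ∃ i, L i p.2 p.1 ∧ ¬ L i p.1 p.2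

/-- The height of a subset of a poset: the maximum size of a chain contained in it. -/
noncomputable def heightSet [PartialOrder α] (S : Set α) : ℕ :=
  sSup {n | ∃ t : Finset α, ↑t ⊆ S ∧ IsChain (· ≤ ·) (↑t : Set α) ∧ t.card = n}

/-- The height of a poset: the maximum size of a chain. -/
noncomputable def pheight (α : Type*) [PartialOrder α] : ℕ :=
  heightSet (Set.univ : Set α)

/-- The standard example `S_d`: minimal elements `a_i = inl i`, maximal elements
`b_j = inr j`, with `a_i < b_j` iff `i ≠ j`. -/
def StdEx (d : ℕ) : Type := Fin d ⊕ Fin d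

def StdEx.le {d : ℕ} : StdEx d → StdEx d → Prop
  | .inl i, .inl j => i = j
  | .inr i, .inr j => i = j
  | .inl i, .inr j => i ≠ j
  | .inr _, .inl _ => False

theorem StdEx.le_refl' {d : ℕ} (x : StdEx d) : StdEx.le x x := by
  cases x <;> simp [StdEx.le]

theorem StdEx.le_trans' {d : ℕ} (x y z : StdEx d)
    (hxy : StdEx.le x y) (hyz : StdEx.le y z) : StdEx.le x z := by
  cases x <;> cases y <;> cases z <;> simp_all [StdEx.le]

theorem StdEx.le_antisymm' {d : ℕ} (x y : StdEx d)
    (hxy : StdEx.le x y) (hyx : StdEx.le y x) : x = y := by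
  cases x <;> cases y <;> simp_all [StdEx.le] <;> subst_vars <;> rfl

instance (d : ℕ) : PartialOrder (StdEx d) where
  le := StdEx.le
  le_refl := StdEx.le_refl'
  le_trans := StdEx.le_trans'
  le_antisymm := StdEx.le_antisymm'

/-!
The `k`-th of `d` linear extensions lists all `a_i`, `i ≠ k`, then `b_k < a_k`, then all `b_j`,
`j ≠ k`; these realize `S_d` as soon as `d ≥ 2` (an extension putting `b_i` above some `a_j`
needs `k ≠ i`). Conversely a linear extension in which `b_i < a_i` and `b_j < a_j` with `i ≠ j`
would give `a_i < b_j < a_j < b_i`, so each of the `d` incomparable pairs `(a_i, b_i)` is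
reversed by a different extension of any realizer.
-/

theorem isLinExt_of_monotone_of_injective {β : Type*} [PartialOrder α] [LinearOrder β]
    {f : α → β} (hmono : Monotone f) (hinj : Function.Injective f) :
    IsLinExt fun x y => f x ≤ f y :=
  ⟨{ refl := fun _ => le_rfl
     trans := fun _ _ _ => le_trans
     antisymm := fun _ _ hxy hyx => hinj (le_antisymm hxy hyx)
     total := fun _ _ => le_total _ _ }, fun _ _ h => hmono h⟩

theorem isRealizer_of_exists_not_rel [PartialOrder α] {d : ℕ} {L : Fin d → α → α → Prop}
    (hL : ∀ i, IsLinExt (L i)) (hsep : ∀ x y : α, ¬ x ≤ y → ∃ i, ¬ L i x y) : IsRealizer L := by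
  refine ⟨hL, fun x y => ⟨fun hxy i => (hL i).2 x y hxy, fun h => ?_⟩⟩
  by_contra hxy
  obtain ⟨i, hi⟩ := hsep x y hxy
  exact hi (h i)

/-- Of two crossing pairs (`a ≤ b'`, `a' ≤ b`), a linear extension reverses at most one. -/
theorem IsLinExt.rel_of_crossing [PartialOrder α] {r : α → α → Prop} (hr : IsLinExt r)
    {a b a' b' : α} (hab' : a ≤ b') (ha'b : a' ≤ b) (hr' : ¬ r a' b') : r a b :=
  have : IsLinearOrder α r := hr.1
  have hb'a' : r b' a' := (total_of r a' b').resolve_left hr'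
  _root_.trans (_root_.trans (hr.2 _ _ hab') hb'a') (hr.2 _ _ ha'b)

theorem IsRealizer.card_le_of_crossing [PartialOrder α] {ι : Type*} [Fintype ι] {n : ℕ}
    {L : Fin n → α → α → Prop} (hL : IsRealizer L) (a b : ι → α)
    (hcross : ∀ i j, i ≠ j → a i ≤ b j) (hinc : ∀ i, ¬ a i ≤ b i) : Fintype.card ι ≤ n := by
  have hrev : ∀ i, ∃ k, ¬ L k (a i) (b i) := fun i => by
    simpa only [hL.2, not_forall] using hinc i
  choose k hk using hrev
  have hinj : Function.Injective k := fun i j hij => by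
    by_contra hne
    exact hk i ((hL.1 (k i)).rel_of_crossing (hcross i j hne) (hcross j i (Ne.symm hne))
      (hij ▸ hk j))
  simpa using Fintype.card_le_of_injective k hinj

theorem pdim_eq_of_isRealizer [PartialOrder α] {d : ℕ} (hd : 0 < d)
    {L : Fin d → α → α → Prop} (hL : IsRealizer L)
    (hmin : ∀ n (L' : Fin n → α → α → Prop), IsRealizer L' → d ≤ n) : pdim α = d :=
  le_antisymm (Nat.sInf_le ⟨hd, L, hL⟩)
    (le_csInf ⟨d, hd, L, hL⟩ fun _ ⟨_, L', hL'⟩ => hmin _ L' hL')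

namespace StdEx

variable {d : ℕ}

def a (i : Fin d) : StdEx d := .inl i

def b (j : Fin d) : StdEx d := .inr j

@[elab_as_elim, induction_eliminator]
theorem induction {motive : StdEx d → Prop} (ha : ∀ i, motive (a i)) (hb : ∀ j, motive (b j)) :
    ∀ x, motive x
  | .inl i => ha i
  | .inr j => hb j

@[simp] theorem a_le_a {i j : Fin d} : a i ≤ a j ↔ i = j := Iff.rfl

@[simp] theorem b_le_b {i j : Fin d} : b i ≤ b j ↔ i = j := Iff.rfl

@[simp] theorem a_le_b {i j : Fin d} : a i ≤ b j ↔ i ≠ j := Iff.rfl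

@[simp] theorem not_b_le_a {i j : Fin d} : ¬ b i ≤ a j := id

/-- Position in the `k`-th linear extension `a_0 < ⋯ < a_{d-1} < b_k < a_k < b_0 < ⋯ < b_{d-1}`
of the standard example (with `a_k`, `b_k` left out of the two runs). -/
def rank (k : Fin d) : StdEx d → ℕ
  | .inl i => if i = k then d + 1 else i
  | .inr j => if j = k then d else d + 2 + j

@[simp] theorem rank_a (k i : Fin d) : rank k (a i) = if i = k then d + 1 else i := rfl

@[simp] theorem rank_b (k j : Fin d) : rank k (b j) = if j = k then d else d + 2 + j := rfl

theorem rank_injective (k : Fin d) : Function.Injective (rank k) := by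
  intro x y h
  induction x <;> induction y <;> simp only [rank_a, rank_b] at h <;> split_ifs at h <;>
    grind

theorem monotone_rank (k : Fin d) : Monotone (rank k) := by
  intro x y h
  induction x <;> induction y <;> simp only [a_le_a, b_le_b, a_le_b, not_b_le_a] at h <;>
    simp only [rank_a, rank_b] <;> grind

theorem exists_rank_lt_of_not_le (hd : 2 ≤ d) {x y : StdEx d} (h : ¬ x ≤ y) :
    ∃ k, rank k y < rank k x := by
  have : Nontrivial (Fin d) := Fin.nontrivial_iff_two_le.mpr hd
  induction x with
  | ha i => induction y with
    | ha j => exact ⟨i, by grind [rank_a]⟩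
    | hb j => exact ⟨i, by grind [rank_a, rank_b, a_le_b]⟩
  | hb i =>
    obtain ⟨k, hk⟩ := exists_ne i
    induction y with
    | ha j => exact ⟨k, by grind [rank_a, rank_b]⟩
    | hb j => exact ⟨j, by grind [rank_b, b_le_b]⟩

theorem isRealizer_rank (hd : 2 ≤ d) : IsRealizer fun k (x y : StdEx d) => rank k x ≤ rank k y :=
  isRealizer_of_exists_not_rel (fun k => isLinExt_of_monotone_of_injective (monotone_rank k)
    (rank_injective k)) fun _ _ h => (exists_rank_lt_of_not_le hd h).imp fun _ => not_le.mpr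

end StdEx

/-- For every `d ≥ 2`, the standard example `S_d` has order dimension exactly `d`. -/
theorem standard_example_dim (d : ℕ) (hd : 2 ≤ d) : pdim (StdEx d) = d :=
  pdim_eq_of_isRealizer (by omega) (StdEx.isRealizer_rank hd) fun _ _ hL => by
    simpa using hL.card_le_of_crossing StdEx.a StdEx.b (fun _ _ => StdEx.a_le_b.mpr) (by simp)
end

section
/- For a finite poset P and a set S of incomparable pairs of P, the following are equivalent: (1) there is no linear extension L of P reversing S (i.e., with x > y in L for all (x,y) ∈ S); (2) S contains an alternating cycle; (3) S contains a strict alternating cycle. -/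
/-!
A linear extension reversing `S` must contain `<` and put `y` below `x` for every `(x, y) ∈ S`,
so one exists iff the transitive closure of these relations is acyclic (Szpilrajn, `extend_partialOrder`).
A cycle of that closure unwinds into an alternating path `x₀ ≤ y₁, x₁ ≤ y₂, …` that closes up,
i.e. an alternating cycle; conversely, along an alternating cycle a reversing extension would give
`y₀ < x₀ ≤ y₁ < x₁ ≤ ⋯ ≤ y₀`. A shortest alternating cycle is strict, since a chord `xᵢ ≤ yⱼ`
with `j ≠ i + 1` cuts off a shorter one.
-/

variable {α : Type*}

/-- An alternating cycle `(x_0,y_0), …, (x_{s-1},y_{s-1})` in `S`: `s ≥ 2` and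
`x_i ≤ y_{i+1}` cyclically. -/
def IsAltCycle [PartialOrder α] (S : Set (α × α)) (s : ℕ) (x y : ℕ → α) : Prop :=
  2 ≤ s ∧ (∀ i < s, (x i, y i) ∈ S) ∧ ∀ i < s, x i ≤ y ((i + 1) % s)

/-- A strict alternating cycle: additionally `x_i ≤ y_j` only when `j ≡ i + 1 (mod s)`. -/
def IsStrictAltCycle [PartialOrder α] (S : Set (α × α)) (s : ℕ) (x y : ℕ → α) : Prop :=
  IsAltCycle S s x y ∧ ∀ i < s, ∀ j < s, x i ≤ y j → j = (i + 1) % s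


section AltCycle
variable [PartialOrder α] {S : Set (α × α)} {x y : ℕ → α}

def IsAltPath (S : Set (α × α)) (n : ℕ) (x y : ℕ → α) : Prop :=
  (∀ i ≤ n, (x i, y i) ∈ S) ∧ ∀ i < n, x i ≤ y (i + 1)

lemma IsAltPath.mono {m n : ℕ} (h : IsAltPath S n x y) (hmn : m ≤ n) : IsAltPath S m x y :=
  ⟨fun i hi => h.1 i (hi.trans hmn), fun i hi => h.2 i (hi.trans_le hmn)⟩

lemma IsAltPath.snoc {n : ℕ} {a b : α} (h : IsAltPath S n x y) (hab : (a, b) ∈ S)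
    (hxb : x n ≤ b) :
    IsAltPath S (n + 1) (Function.update x (n + 1) a) (Function.update y (n + 1) b) := by
  refine ⟨fun i hi => ?_, fun i hi => ?_⟩
  · rcases hi.lt_or_eq with hi | rfl
    · simpa [hi.ne] using h.1 i (by omega)
    · simpa using hab
  · rcases (Nat.lt_succ_iff.1 hi).lt_or_eq with hi | rfl
    · rw [Function.update_of_ne (by omega), Function.update_of_ne (by omega)]
      exact h.2 i hi
    · simpa using hxb

lemma isAltCycle_iff_isAltPath {s : ℕ} :
    IsAltCycle S s x y ↔ 2 ≤ s ∧ IsAltPath S (s - 1) x y ∧ x (s - 1) ≤ y 0 := by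
  refine ⟨fun ⟨hs, hmem, hle⟩ => ⟨hs, ⟨fun i hi => hmem i (by omega), fun i hi => ?_⟩, ?_⟩,
    fun ⟨hs, ⟨hmem, hle⟩, hclose⟩ => ⟨hs, fun i hi => hmem i (by omega), fun i hi => ?_⟩⟩
  · simpa [Nat.mod_eq_of_lt (show i + 1 < s by omega)] using hle i (by omega)
  · simpa [Nat.sub_add_cancel (show 1 ≤ s by omega)] using hle (s - 1) (by omega)
  · rcases (show i + 1 < s ∨ i + 1 = s by omega) with hi | hi
    · rw [Nat.mod_eq_of_lt hi]
      exact hle i (by omega)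
    · rw [hi, Nat.mod_self, show i = s - 1 by omega]
      exact hclose

lemma IsAltCycle.rotate {s : ℕ} (h : IsAltCycle S s x y) (c : ℕ) :
    IsAltCycle S s (fun i => x ((i + c) % s)) (fun i => y ((i + c) % s)) := by
  obtain ⟨hs, hmem, hle⟩ := h
  refine ⟨hs, fun i _ => hmem _ (Nat.mod_lt _ (by omega)), fun i _ => ?_⟩
  have key : ((i + 1) % s + c) % s = ((i + c) % s + 1) % s := by
    rw [Nat.mod_add_mod, Nat.mod_add_mod, Nat.add_right_comm]
  simpa only [key] using hle _ (Nat.mod_lt _ (by omega))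

lemma exists_isAltCycle_of_isAltPath {n : ℕ} (h : IsAltPath S n x y) (hxy : x n ≤ y 0) :
    ∃ s x y, IsAltCycle S s x y := by
  rcases n with _ | n
  · -- a single pair with `x₀ ≤ y₀` is an alternating cycle of length 2 when repeated
    exact ⟨2, fun _ => x 0, fun _ => y 0, by omega, fun _ _ => h.1 0 le_rfl, fun _ _ => hxy⟩
  · exact ⟨n + 2, x, y, isAltCycle_iff_isAltPath.2 ⟨by omega, h, hxy⟩⟩

lemma IsAltCycle.exists_shorter {s i j : ℕ} (hc : IsAltCycle S s x y) (hi : i < s) (hj : j < s)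
    (hij : i ≠ j) (hne : j ≠ (i + 1) % s) (hle : x i ≤ y j) :
    ∃ t < s, ∃ x' y', IsAltCycle S t x' y' := by
  have hs := hc.1
  obtain ⟨d, hds, rfl⟩ : ∃ d < s, (d + j) % s = i :=
    ⟨(i + (s - j)) % s, Nat.mod_lt _ (by omega), by
      rw [Nat.mod_add_mod, show i + (s - j) + j = i + s by omega, Nat.add_mod_right,
        Nat.mod_eq_of_lt hi]⟩
  have hd0 : d ≠ 0 := by
    rintro rfl
    exact hij (by simpa using Nat.mod_eq_of_lt hj)
  have hd1 : d ≠ s - 1 := by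
    rintro rfl
    apply hne
    rw [Nat.mod_add_mod, show s - 1 + j + 1 = j + s by omega, Nat.add_mod_right,
      Nat.mod_eq_of_lt hj]
  -- after rotating by `j` the chord reads `x'_d ≤ y'_0` and closes `0, …, d` into a cycle
  have hrot := isAltCycle_iff_isAltPath.1 (hc.rotate j)
  have hchord : x ((d + j) % s) ≤ y ((0 + j) % s) := by
    rwa [Nat.zero_add, Nat.mod_eq_of_lt hj]
  exact ⟨d + 1, by omega, _, _,
    isAltCycle_iff_isAltPath.2 ⟨by omega, hrot.2.1.mono (by omega), hchord⟩⟩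

lemma exists_isStrictAltCycle_of_isAltCycle (hS : S ⊆ IncPairs α)
    (h : ∃ s x y, IsAltCycle S s x y) : ∃ s x y, IsStrictAltCycle S s x y := by
  classical
  obtain ⟨x, y, hc⟩ := Nat.find_spec h
  refine ⟨_, x, y, hc, fun i hi j hj hle => ?_⟩
  by_contra hne
  have hij : i ≠ j := by
    rintro rfl
    exact (hS (hc.2.1 i hi)).1 hle
  obtain ⟨t, ht, _, _, hc'⟩ := hc.exists_shorter hi hj hij hne hle
  exact Nat.find_min h ht ⟨_, _, hc'⟩

lemma Reverses.not_rel_of_isAltPath {r : α → α → Prop} (hr : IsLinExt r) (hrev : Reverses r S)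
    {n : ℕ} (h : IsAltPath S n x y) : ¬ r (x n) (y 0) := by
  have : IsLinearOrder α r := hr.1
  induction n with
  | zero => exact (hrev _ (h.1 0 le_rfl)).2
  | succ n ih =>
    intro hn
    have h0n : r (y 0) (x n) := (total_of r _ _).resolve_right (ih (h.mono n.le_succ))
    have hstep : r (x n) (y (n + 1)) := hr.2 _ _ (h.2 n n.lt_succ_self)
    exact (hrev _ (h.1 (n + 1) le_rfl)).2 (trans_of r hn (trans_of r h0n hstep))

lemma not_reversible_of_isAltCycle {s : ℕ} (hc : IsAltCycle S s x y) : ¬ Reversible S := by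
  rintro ⟨r, hr, hrev⟩
  obtain ⟨-, hpath, hclose⟩ := isAltCycle_iff_isAltPath.1 hc
  exact hrev.not_rel_of_isAltPath hr hpath (hr.2 _ _ hclose)

lemma lt_or_exists_isAltPath_of_transGen {a b : α}
    (h : Relation.TransGen (fun u v => u < v ∨ (v, u) ∈ S) a b) :
    a < b ∨ ∃ n x y, IsAltPath S n x y ∧ a ≤ y 0 ∧ x n ≤ b := by
  have single {u v : α} (hvu : (v, u) ∈ S) : IsAltPath S 0 (fun _ => v) (fun _ => u) :=
    ⟨fun _ _ => hvu, fun _ h => absurd h (Nat.not_lt_zero _)⟩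
  induction h with
  | single hab =>
    rcases hab with hab | hab
    · exact .inl hab
    · exact .inr ⟨0, _, _, single hab, le_rfl, le_rfl⟩
  | tail _ hbc ih =>
    rcases ih, hbc with ⟨hab | ⟨n, x, y, hp, hay, hxb⟩, hbc | hbc⟩
    · exact .inl (hab.trans hbc)
    · exact .inr ⟨0, _, _, single hbc, hab.le, le_rfl⟩
    · exact .inr ⟨n, x, y, hp, hay, hxb.trans hbc.le⟩
    · exact .inr ⟨n + 1, _, _, hp.snoc hbc hxb, by simpa using hay, by simp⟩

lemma reversible_of_forall_not_isAltCycle (h : ∀ s x y, ¬ IsAltCycle S s x y) :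
    Reversible S := by
  set B : α → α → Prop := fun u v => u < v ∨ (v, u) ∈ S
  have hacyc (a : α) : ¬ Relation.TransGen B a a := by
    intro ha
    rcases lt_or_exists_isAltPath_of_transGen ha with ha | ⟨n, x, y, hp, hay, hxa⟩
    · exact lt_irrefl a ha
    · obtain ⟨s, x, y, hc⟩ := exists_isAltCycle_of_isAltPath hp (hxa.trans hay)
      exact h s x y hc
  have : IsPartialOrder α (Relation.ReflTransGen B) :=
    { antisymm a b hab hba := by
        rcases Relation.reflTransGen_iff_eq_or_transGen.1 hab with rfl | hab
        · rfl
        · exact absurd (hab.trans_left hba) (hacyc a) }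
  obtain ⟨r, hlin, hBr⟩ := extend_partialOrder (Relation.ReflTransGen B)
  have : IsLinearOrder α r := hlin
  have hSr {p : α × α} (hp : p ∈ S) : r p.2 p.1 := hBr _ _ (.single (.inr hp))
  refine ⟨r, ⟨hlin, fun a b hab => ?_⟩, fun ⟨a, b⟩ hp => ⟨hSr hp, fun hr => ?_⟩⟩
  · rcases hab.eq_or_lt with rfl | hab
    · exact refl_of r a
    · exact hBr _ _ (.single (.inl hab))
  · obtain rfl : a = b := antisymm_of r hr (hSr hp)
    exact hacyc a (.single (.inr hp))

end AltCycle

theorem not_reversible_iff_altCycle_general (α : Type*) [PartialOrder α]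
    (S : Set (α × α)) (hS : S ⊆ IncPairs α) :
    (¬ Reversible S ↔ ∃ s x y, IsAltCycle S s x y) ∧
    (¬ Reversible S ↔ ∃ s x y, IsStrictAltCycle S s x y) := by
  have hcycle : ¬ Reversible S ↔ ∃ s x y, IsAltCycle S s x y := by
    refine ⟨fun h => ?_, fun ⟨_, _, _, hc⟩ => not_reversible_of_isAltCycle hc⟩
    by_contra hno
    exact h (reversible_of_forall_not_isAltCycle fun s x y hc => hno ⟨s, x, y, hc⟩)
  refine ⟨hcycle, hcycle.trans ⟨exists_isStrictAltCycle_of_isAltCycle hS, ?_⟩⟩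
  rintro ⟨s, x, y, hc, -⟩
  exact ⟨s, x, y, hc⟩

/-- A set of incomparable pairs is non-reversible iff it contains an alternating cycle,
iff it contains a strict alternating cycle. -/
theorem not_reversible_iff_altCycle (α : Type*) [PartialOrder α] [Fintype α]
    (S : Set (α × α)) (hS : S ⊆ IncPairs α) :
    (¬ Reversible S ↔ ∃ s x y, IsAltCycle S s x y) ∧
    (¬ Reversible S ↔ ∃ s x y, IsStrictAltCycle S s x y) :=
  not_reversible_iff_altCycle_general α S hS
end

section
/- Let k ≥ 2, let P be a finite poset excluding k+k, let h be the height of P, and let C = {c_1 < … < c_h} be a maximum chain. For 0 ≤ i ≤ h−1, the set Dn(i) of points z ∈ P − C such that i is the largest index with c_i < z (with i = 0 if z is above no point of C) induces a convex subposet of P of height at most 2k−2. -/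
variable {α : Type*}

/-- The poset `k + k`: the disjoint sum of two `k`-element chains. -/
def TwoChains (k : ℕ) : Type := Fin k ⊕ Fin k

def TwoChains.le {k : ℕ} : TwoChains k → TwoChains k → Prop
  | .inl i, .inl j => i.1 ≤ j.1
  | .inr i, .inr j => i.1 ≤ j.1
  | _, _ => False

theorem TwoChains.le_refl' {k : ℕ} (x : TwoChains k) : TwoChains.le x x := by
  cases x <;> simp [TwoChains.le]

theorem TwoChains.le_trans' {k : ℕ} (x y z : TwoChains k)
    (hxy : TwoChains.le x y) (hyz : TwoChains.le y z) : TwoChains.le x z := by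
  cases x <;> cases y <;> cases z <;> simp_all [TwoChains.le] <;> omega

theorem TwoChains.le_antisymm' {k : ℕ} (x y : TwoChains k)
    (hxy : TwoChains.le x y) (hyx : TwoChains.le y x) : x = y := by
  cases x <;> cases y <;> simp_all [TwoChains.le] <;>
    exact congrArg _ (le_antisymm hxy hyx)

instance (k : ℕ) : PartialOrder (TwoChains k) where
  le := TwoChains.le
  le_refl := TwoChains.le_refl'
  le_trans := TwoChains.le_trans'
  le_antisymm := TwoChains.le_antisymm'

/-- Given a chain `c : Fin h → α` (listing `c_1 < ⋯ < c_h`), `dnN c z` is the greatest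
1-based index `i` with `c_i ≤ z`, and `0` if there is none. -/
noncomputable def dnN [PartialOrder α] {h : ℕ} (c : Fin h → α) (z : α) : ℕ :=
  {i : Fin h | c i ≤ z}.ncard

/-- `upN c z` is the least 1-based index `j` with `z ≤ c_j`, and `h + 1` if there is none. -/
noncomputable def upN [PartialOrder α] {h : ℕ} (c : Fin h → α) (z : α) : ℕ :=
  h + 1 - {i : Fin h | z ≤ c i}.ncard

/-- A pair `(x, y)` is dangerous when `dn(x) < dn(y) < up(x) < up(y)`. -/
def Dangerous [PartialOrder α] {h : ℕ} (c : Fin h → α) (p : α × α) : Prop :=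
  dnN c p.1 < dnN c p.2 ∧ dnN c p.2 < upN c p.1 ∧ upN c p.1 < upN c p.2

/-- `Dn(i)`: points outside the chain whose down-index is exactly `i`. -/
def Dn [PartialOrder α] {h : ℕ} (c : Fin h → α) (i : ℕ) : Set α :=
  {z | z ∉ Set.range c ∧ dnN c z = i}

/-- `Ar(i, i+1)`: points outside the chain with `dn(z) ≤ i` and `up(z) ≥ i + 1`. -/
def Ar [PartialOrder α] {h : ℕ} (c : Fin h → α) (i : ℕ) : Set α :=
  {z | z ∉ Set.range c ∧ dnN c z ≤ i ∧ i + 1 ≤ upN c z}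

/-!
Every point of `Dn(i)` lies above exactly `c_1, …, c_i`, which gives convexity. For the height:
if `z_1 < ⋯ < z_m` is a chain in `Dn(i)` and `z_x ≤ c_j`, then
`c_1 < ⋯ < c_i < z_1 < ⋯ < z_x < c_j < ⋯ < c_h` is a chain, so maximality of `C` forces
`j > i + x`. Hence if `m ≥ 2k - 1`, the top `k` points of the chain are incomparable with
`c_{i+1}, …, c_{i+k}`, and these two chains form a copy of `k + k`.
-/

section Chains

variable {β : Type*} [PartialOrder β]

theorem Fin.strictMono_append {m n : ℕ} {f : Fin m → β} {g : Fin n → β} (hf : StrictMono f)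
    (hg : StrictMono g) (hfg : ∀ p q, f p < g q) : StrictMono (Fin.append f g) := by
  intro p q hpq
  induction p using Fin.addCases <;> induction q using Fin.addCases <;>
    simp only [Fin.append_left, Fin.append_right]
  · exact hf ((Fin.strictMono_castAdd n).lt_iff_lt.1 hpq)
  · exact hfg _ _
  · simp only [Fin.lt_def, Fin.val_natAdd, Fin.val_castAdd] at hpq; omega
  · exact hg ((Fin.natAdd_lt_natAdd_iff m).1 hpq)

theorem IsChain.exists_strictMono_fin {t : Finset β} (ht : IsChain (· ≤ ·) (t : Set β)) :
    ∃ f : Fin t.card → β, StrictMono f ∧ ∀ p, f p ∈ t := by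
  classical
  let _ := ht.linearOrder
  let e := monoEquivOfFin (t : Set β) (Fintype.card_coe t)
  exact ⟨fun p => e p, fun p q hpq => e.strictMono hpq, fun p => (e p).2⟩

theorem heightSet_le_of_forall_strictMono {S : Set β} {n : ℕ}
    (h : ∀ m (f : Fin m → β), StrictMono f → (∀ p, f p ∈ S) → m ≤ n) : heightSet S ≤ n := by
  refine csSup_le' ?_
  rintro _ ⟨t, htS, ht, rfl⟩
  obtain ⟨f, hf, hft⟩ := ht.exists_strictMono_fin
  exact h _ f hf fun p => htS (hft p)

theorem StrictMono.le_pheight [Finite β] {n : ℕ} {f : Fin n → β} (hf : StrictMono f) :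
    n ≤ pheight β := by
  classical
  refine le_csSup ⟨Nat.card β, ?_⟩ ⟨Finset.univ.image f, by simp, ?_, ?_⟩
  · rintro _ ⟨t, -, -, rfl⟩
    simpa using Set.ncard_le_card (t : Set β)
  · simpa using hf.monotone.isChain_range
  · simp [Finset.card_image_of_injective _ hf.injective]

/-- The chain `c_{<a}, f, c_{≥b}` has length `a + m + (h - b)`, where `h` is the height. -/
theorem StrictMono.add_le_of_between [Finite β] {c : Fin (pheight β) → β} (hc : StrictMono c)
    {m : ℕ} {f : Fin m → β} (hf : StrictMono f) {a b : ℕ} (hab : a ≤ b) (hb : b ≤ pheight β)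
    (hlow : ∀ p q, p.val < a → c p < f q) (hhigh : ∀ p q, b ≤ p.val → f q < c p) :
    a + m ≤ b := by
  let low : Fin a → β := fun p => c (Fin.castLE (hab.trans hb) p)
  let high : Fin (pheight β - b) → β := fun q => c ⟨b + q, by omega⟩
  have hlow' : StrictMono low := hc.comp (Fin.strictMono_castLE _)
  have hhigh' : StrictMono high := fun p q hpq => hc (Fin.mk_lt_mk.2 (Nat.add_lt_add_left hpq b))
  have hchain := Fin.strictMono_append
    (Fin.strictMono_append hlow' hf fun p q => hlow _ q p.2) hhigh' ?_
  · have := hchain.le_pheight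
    omega
  intro p q
  induction p using Fin.addCases with
  | left p => exact (Fin.append_left _ _ p).symm ▸ hc (by simp [Fin.lt_def]; omega)
  | right p => exact (Fin.append_right _ _ p).symm ▸ hhigh _ _ (by simp)

end Chains

def TwoChains.embedding {β : Type*} [PartialOrder β] {k : ℕ} (a b : Fin k → β)
    (ha : StrictMono a) (hb : StrictMono b) (hab : ∀ r s, ¬ a r ≤ b s ∧ ¬ b s ≤ a r) :
    TwoChains k ↪o β :=
  OrderEmbedding.ofMapLEIff (Sum.elim a b) fun x y => by
    rcases x with r | r <;> rcases y with s | s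
    · exact ha.le_iff_le
    · exact iff_of_false (hab r s).1 id
    · exact iff_of_false (hab s r).2 id
    · exact hb.le_iff_le

section DownIndex

variable {β : Type*} [PartialOrder β] {h : ℕ} {c : Fin h → β}

theorem dnN_mono (c : Fin h → β) : Monotone (dnN c) :=
  fun _ _ hxy => Set.ncard_le_ncard fun _ hj => le_trans hj hxy

theorem dnN_le_length (c : Fin h → β) (z : β) : dnN c z ≤ h :=
  (Set.ncard_le_card _).trans_eq (Nat.card_fin h)

/-- Here `c j` is the paper's `c_{j+1}`: indices are 0-based, while `dnN` counts from 1. -/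
theorem le_iff_lt_dnN (hc : StrictMono c) {z : β} {j : Fin h} : c j ≤ z ↔ j.val < dnN c z := by
  constructor
  · intro hj
    calc j.val < (Finset.Iic j).card := by simp
      _ = (Set.Iic j).ncard := by rw [← Finset.coe_Iic, Set.ncard_coe_finset]
      _ ≤ dnN c z := Set.ncard_le_ncard fun _ hj' => (hc.monotone hj').trans hj
  · intro hj
    by_contra hjz
    have : dnN c z ≤ (Set.Iio j).ncard :=
      Set.ncard_le_ncard fun _ hj' => lt_of_not_ge fun hjj' => hjz ((hc.monotone hjj').trans hj')
    rw [← Finset.coe_Iio, Set.ncard_coe_finset, Fin.card_Iio] at this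
    omega

theorem lt_of_mem_Dn (hc : StrictMono c) {i : ℕ} {z : β} (hz : z ∈ Dn c i) {j : Fin h}
    (hj : j.val < i) : c j < z :=
  lt_of_le_of_ne (le_iff_lt_dnN hc |>.2 (hz.2 ▸ hj)) fun hjz => hz.1 ⟨j, hjz⟩

theorem not_le_of_mem_Dn (hc : StrictMono c) {i : ℕ} {z : β} (hz : z ∈ Dn c i) {j : Fin h}
    (hj : i ≤ j.val) : ¬ c j ≤ z := by
  rw [le_iff_lt_dnN hc, hz.2]
  omega

theorem ordConnected_Dn (hc : StrictMono c) (i : ℕ) : (Dn c i).OrdConnected := by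
  refine ⟨fun x hx y hy w hw => ⟨?_, ?_⟩⟩
  · rintro ⟨j, rfl⟩
    have hj : j.val < dnN c x := by rw [hx.2, ← hy.2]; exact (le_iff_lt_dnN hc).1 hw.2
    exact hx.1 ⟨j, le_antisymm ((le_iff_lt_dnN hc).2 hj) hw.1⟩
  · exact le_antisymm (hy.2 ▸ dnN_mono c hw.2) (hx.2 ▸ dnN_mono c hw.1)

end DownIndex

section MaximumChain

variable {β : Type*} [PartialOrder β] [Finite β] {c : Fin (pheight β) → β}

theorem add_le_of_mem_Dn (hc : StrictMono c) {i m : ℕ} {z : Fin m → β} (hz : StrictMono z)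
    (hzD : ∀ p, z p ∈ Dn c i) (x : Fin m) {b : ℕ} (hib : i ≤ b) (hb : b ≤ pheight β)
    (hxb : ∀ p : Fin (pheight β), b ≤ p.val → z x ≤ c p) : i + x + 1 ≤ b := by
  have hz' : StrictMono fun q : Fin (x + 1) => z (Fin.castLE x.2 q) :=
    hz.comp (Fin.strictMono_castLE _)
  refine hc.add_le_of_between hz' hib hb (fun p q hp => lt_of_mem_Dn hc (hzD _) hp) ?_
  intro p q hp
  refine lt_of_le_of_ne ((hz.monotone (Fin.le_def.2 ?_)).trans (hxb p hp)) fun hqp =>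
    (hzD _).1 ⟨p, hqp.symm⟩
  simpa using Nat.lt_succ_iff.1 q.2

theorem heightSet_Dn_le {k : ℕ} (hexc : ¬ Nonempty (TwoChains k ↪o β)) (hc : StrictMono c)
    (i : ℕ) : heightSet (Dn c i) ≤ 2 * k - 2 := by
  refine heightSet_le_of_forall_strictMono fun m z hz hzD => ?_
  by_contra! hm
  have hi : i ≤ pheight β := (hzD ⟨m - 1, by omega⟩).2 ▸ dnN_le_length c _
  have hik : i + k ≤ pheight β := by
    have := add_le_of_mem_Dn hc hz hzD ⟨m - 1, by omega⟩ hi le_rfl fun p hp => absurd p.2 (by omega)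
    dsimp only at this
    omega
  let top : Fin k → β := fun r => z ⟨m - k + r, by omega⟩
  let bottom : Fin k → β := fun s => c ⟨i + s, by omega⟩
  refine hexc ⟨TwoChains.embedding top bottom
    (fun r r' hr => hz (Fin.mk_lt_mk.2 (Nat.add_lt_add_left hr _)))
    (fun s s' hs => hc (Fin.mk_lt_mk.2 (Nat.add_lt_add_left hs _))) fun r s => ⟨?_, ?_⟩⟩
  · intro hle
    have := add_le_of_mem_Dn hc hz hzD ⟨m - k + r, by omega⟩ (b := i + s) (by omega) (by omega)
      fun p hp => hle.trans (hc.monotone (Fin.le_def.2 hp))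
    dsimp only at this
    omega
  · exact not_le_of_mem_Dn hc (hzD _) (by simp)

end MaximumChain

theorem dn_convex_height_le_general {α : Type*} [PartialOrder α] [Fintype α] (k : ℕ)
    (hexc : ¬ Nonempty (TwoChains k ↪o α))
    (c : Fin (pheight α) → α) (hc : StrictMono c)
    (i : ℕ) :
    (Dn c i).OrdConnected ∧ heightSet (Dn c i) ≤ 2 * k - 2 :=
  ⟨ordConnected_Dn hc i, heightSet_Dn_le hexc hc i⟩

/-- If `P` excludes `k + k` and `C = {c_1 < ⋯ < c_h}` is a maximum chain, then for
`0 ≤ i ≤ h − 1` the set `Dn(i)` is convex and has height at most `2k − 2`. -/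
theorem dn_convex_height_le {α : Type*} [PartialOrder α] [Fintype α] (k : ℕ) (hk : 2 ≤ k)
    (hexc : ¬ Nonempty (TwoChains k ↪o α))
    (c : Fin (pheight α) → α) (hc : StrictMono c)
    (i : ℕ) (hi : i ≤ pheight α - 1) :
    (Dn c i).OrdConnected ∧ heightSet (Dn c i) ≤ 2 * k - 2 :=
  dn_convex_height_le_general k hexc c hc i
end

section
/- The poset P on points a_1,…,a_n, b_1,…,b_n, c_0,…,c_n (n ≥ 2) generated by the relations c_0 < … < c_n, a_i < c_i and c_{i−1} < b_i for 1 ≤ i ≤ n, and a_i < b_j for 1 ≤ j < i ≤ n, excludes 3+3: every chain of size at least 3 in P contains a point of the form c_i, hence P contains no two incomparable 3-element chains. -/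
variable {α : Type*}

/-- The Kelly-like poset on `a_1, …, a_n, b_1, …, b_n, c_0, …, c_n`
(here `KP.a i` is `a_{i+1}`, `KP.b i` is `b_{i+1}`, `KP.c i` is `c_i`). -/
inductive KP (n : ℕ) : Type where
  | a : Fin n → KP n
  | b : Fin n → KP n
  | c : Fin (n + 1) → KP n

/-- The order generated by `c_0 < ⋯ < c_n`, `a_i < c_i`, `c_{i-1} < b_i` (`1 ≤ i ≤ n`),
and `a_i < b_j` (`1 ≤ j < i ≤ n`), written out explicitly (its transitive closure). -/
def KP.le {n : ℕ} : KP n → KP n → Prop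
  | .a i, .a j => i = j
  | .b i, .b j => i = j
  | .c i, .c j => i.1 ≤ j.1
  | .a i, .c j => i.1 + 1 ≤ j.1
  | .a i, .b j => i ≠ j
  | .c i, .b j => i.1 ≤ j.1
  | _, _ => False

theorem KP.le_refl' {n : ℕ} (x : KP n) : KP.le x x := by
  cases x <;> simp [KP.le]

theorem KP.le_trans' {n : ℕ} (x y z : KP n)
    (hxy : KP.le x y) (hyz : KP.le y z) : KP.le x z := by
  cases x <;> cases y <;> cases z <;>
    simp_all only [KP.le, ne_eq, Fin.ext_iff] <;> first | omega | exact not_false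

theorem KP.le_antisymm' {n : ℕ} (x y : KP n)
    (hxy : KP.le x y) (hyx : KP.le y x) : x = y := by
  cases x <;> cases y <;> simp_all only [KP.le, ne_eq, Fin.ext_iff] <;>
    first | omega | exact congrArg _ (Fin.ext (by omega))

instance (n : ℕ) : PartialOrder (KP n) where
  le := KP.le
  le_refl := KP.le_refl'
  le_trans := KP.le_trans'
  le_antisymm := KP.le_antisymm'

/-!
A chain meets an antichain in at most one point. In `KP n` the points `a_i` form an antichain,
and so do the points `b_j`, so a chain avoiding every `c_i` has at most two elements. Each chain
of a copy of `3 + 3` must therefore pass through the chain `c_0 < ⋯ < c_n`, which would make an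
element of one chain comparable to an element of the other.
-/

theorem IsChain.encard_le_two_of_subset_union {β : Type*} {r : β → β → Prop} {s A B : Set β}
    (hs : IsChain r s) (hA : IsAntichain r A) (hB : IsAntichain r B) (hsub : s ⊆ A ∪ B) :
    s.encard ≤ 2 := by
  have hsA : (s ∩ A).encard ≤ 1 := Set.encard_le_one_iff_subsingleton.2 <|
    inter_subsingleton_of_isChain_of_isAntichain hs hA
  have hsB : (s ∩ B).encard ≤ 1 := Set.encard_le_one_iff_subsingleton.2 <|
    inter_subsingleton_of_isChain_of_isAntichain hs hB
  calc s.encard = (s ∩ A ∪ s ∩ B).encard := by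
        rw [← Set.inter_union_distrib_left, Set.inter_eq_left.2 hsub]
    _ ≤ (s ∩ A).encard + (s ∩ B).encard := Set.encard_union_le _ _
    _ ≤ 1 + 1 := add_le_add hsA hsB
    _ = 2 := by norm_num

theorem OrderEmbedding.isChain_coe_map_univ {β γ : Type*} [Fintype β] [LinearOrder β]
    [Preorder γ] (g : β ↪o γ) :
    IsChain (· ≤ ·) (↑(Finset.univ.map g.toEmbedding) : Set γ) := by
  rw [Finset.coe_map, Finset.coe_univ, Set.image_univ]
  exact g.monotone.isChain_range

namespace TwoChains

variable {k : ℕ}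

def inl : Fin k ↪o TwoChains k := OrderEmbedding.ofMapLEIff Sum.inl fun _ _ => Iff.rfl

def inr : Fin k ↪o TwoChains k := OrderEmbedding.ofMapLEIff Sum.inr fun _ _ => Iff.rfl

theorem not_inl_le_inr (i j : Fin k) : ¬ inl i ≤ inr j := id

theorem not_inr_le_inl (i j : Fin k) : ¬ inr i ≤ inl j := id

end TwoChains

theorem exists_apply_eq_of_chains_meet {β ι : Type*} [PartialOrder β] {c : ι → β} {k : ℕ}
    (h : ∀ t : Finset β, IsChain (· ≤ ·) (↑t : Set β) → k ≤ t.card → ∃ i, c i ∈ t)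
    (g : Fin k ↪o β) : ∃ i p, c i = g p := by
  obtain ⟨i, hi⟩ := h _ g.isChain_coe_map_univ (by simp)
  obtain ⟨p, -, hp⟩ := Finset.mem_map.1 hi
  exact ⟨i, p, hp.symm⟩

theorem not_nonempty_twoChains_embedding_of_chains_meet {β ι : Type*} [PartialOrder β]
    [LinearOrder ι] {c : ι → β} (hc : Monotone c) {k : ℕ}
    (h : ∀ t : Finset β, IsChain (· ≤ ·) (↑t : Set β) → k ≤ t.card → ∃ i, c i ∈ t) :
    ¬ Nonempty (TwoChains k ↪o β) := by
  rintro ⟨f⟩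
  obtain ⟨i, p, hp⟩ := exists_apply_eq_of_chains_meet h (TwoChains.inl.trans f)
  obtain ⟨j, q, hq⟩ := exists_apply_eq_of_chains_meet h (TwoChains.inr.trans f)
  rcases le_total i j with hij | hji
  · have hle := hc hij
    rw [hp, hq] at hle
    exact TwoChains.not_inl_le_inr p q (f.le_iff_le.1 hle)
  · have hle := hc hji
    rw [hp, hq] at hle
    exact TwoChains.not_inr_le_inl q p (f.le_iff_le.1 hle)

namespace KP

variable {n : ℕ}

theorem monotone_c : Monotone (KP.c : Fin (n + 1) → KP n) := fun _ _ h => h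

theorem isAntichain_range_a : IsAntichain (· ≤ ·) (Set.range (KP.a : Fin n → KP n)) := by
  rintro _ ⟨i, rfl⟩ _ ⟨j, rfl⟩ hne (hij : i = j)
  exact hne (congrArg _ hij)

theorem isAntichain_range_b : IsAntichain (· ≤ ·) (Set.range (KP.b : Fin n → KP n)) := by
  rintro _ ⟨i, rfl⟩ _ ⟨j, rfl⟩ hne (hij : i = j)
  exact hne (congrArg _ hij)

theorem exists_c_mem_of_isChain {t : Finset (KP n)} (ht : IsChain (· ≤ ·) (↑t : Set (KP n)))
    (hcard : 3 ≤ t.card) : ∃ i, KP.c i ∈ t := by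
  by_contra! hc
  have hsub : (↑t : Set (KP n)) ⊆ Set.range KP.a ∪ Set.range KP.b := by
    rintro (i | i | i) hx
    · exact Or.inl ⟨i, rfl⟩
    · exact Or.inr ⟨i, rfl⟩
    · exact absurd hx (hc i)
  have hle := ht.encard_le_two_of_subset_union isAntichain_range_a isAntichain_range_b hsub
  rw [Set.encard_coe_eq_coe_finsetCard] at hle
  norm_cast at hle
  omega

end KP

theorem kp_excludes_three_plus_three_general (n : ℕ) :
    (∀ t : Finset (KP n), IsChain (· ≤ ·) (↑t : Set (KP n)) → 3 ≤ t.card →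
      ∃ i, KP.c i ∈ t) ∧
    ¬ Nonempty (TwoChains 3 ↪o KP n) :=
  have hchains : ∀ t : Finset (KP n), IsChain (· ≤ ·) (↑t : Set (KP n)) → 3 ≤ t.card →
      ∃ i, KP.c i ∈ t := fun _ ht hcard => KP.exists_c_mem_of_isChain ht hcard
  ⟨hchains, not_nonempty_twoChains_embedding_of_chains_meet KP.monotone_c hchains⟩

/-- Every chain of size at least 3 in `KP n` contains a point `c_i`, and hence `KP n`
excludes `3 + 3`. -/
theorem kp_excludes_three_plus_three (n : ℕ) (hn : 2 ≤ n) :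
    (∀ t : Finset (KP n), IsChain (· ≤ ·) (↑t : Set (KP n)) → 3 ≤ t.card →
      ∃ i, KP.c i ∈ t) ∧
    ¬ Nonempty (TwoChains 3 ↪o KP n) :=
  kp_excludes_three_plus_three_general n
end

section
/- Let P be a finite poset, let C = {c_1 < … < c_h} be a maximum chain, and let S be a set of dangerous incomparable pairs of P each satisfying dn(b) > c_1 and up(a) < c_h. Suppose for every i with 1 ≤ i ≤ h−1 there is a coloring φ_i of the incomparable pairs of the convex subposet Ar(i,i+1) with d_1 colors such that each color class is reversible. Let S′ be the set of pairs (a,b) ∈ S that are left-safe with respect to S, meaning there is no b′ ∈ B(S) with a ≤ b′ in P and dn(b′) < dn(b). Then dim(S′) ≤ d_1, i.e., S′ can be reversed by d_1 linear extensions of P. -/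
variable {α : Type*}

/-- Reversibility of a set of pairs from a subposet `Q`, via a linear extension of the
induced order on `Q`. -/
def ReversibleOn [PartialOrder α] (Q : Set α) (S : Set (α × α)) : Prop :=
  Reversible {p : ↥Q × ↥Q | ((p.1 : α), (p.2 : α)) ∈ S}

/-!
A set `T` of incomparable pairs is reversible as soon as it has no alternating cycle
`(a₁, b₁), …, (aₖ, bₖ)` with `aⱼ ≤ bⱼ₊₁` (indices mod `k`): reversing the pairs of `T` in the
strict order then creates no cycle, and Szpilrajn's theorem extends the result to a linear order.
Colour each left-safe pair `(a, b)` of `S` by `φ_{dn(b)}(a, b)`. Along an alternating cycle inside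
one colour class, left-safety makes `dn(b)` non-decreasing, hence constant, say `= i`; the whole
cycle then lies in `Inc(Ar(i, i+1))` inside a single colour class of `φ_i`, which is reversible,
and a reversible set has no alternating cycle.
-/

open Relation

section AlternatingCycles

variable [PartialOrder α] {T U : Set (α × α)}

def AlternatingStep (T : Set (α × α)) (p q : α × α) : Prop :=
  p ∈ T ∧ q ∈ T ∧ p.1 ≤ q.2

def LtOrReversed (T : Set (α × α)) (x y : α) : Prop :=
  x < y ∨ (y, x) ∈ T

theorem LtOrReversed.lt_or_exists_of_transGen {x y : α} (hxy : TransGen (LtOrReversed T) x y) :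
    x < y ∨ ∃ p ∈ T, ∃ q ∈ T, x ≤ q.2 ∧ ReflTransGen (AlternatingStep T) q p ∧ p.1 ≤ y := by
  induction hxy with
  | @single y hxy =>
    rcases hxy with hlt | hyx
    · exact .inl hlt
    · exact .inr ⟨(y, x), hyx, (y, x), hyx, le_rfl, .refl, le_rfl⟩
  | @tail y z _ hyz ih =>
    rcases hyz, ih with ⟨hlt | hzy, hlt' | ⟨p, hp, q, hq, hxq, hqp, hpy⟩⟩
    · exact .inl (hlt'.trans hlt)
    · exact .inr ⟨p, hp, q, hq, hxq, hqp, hpy.trans hlt.le⟩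
    · exact .inr ⟨(z, y), hzy, (z, y), hzy, hlt'.le, .refl, le_rfl⟩
    · exact .inr ⟨(z, y), hzy, q, hq, hxq, hqp.tail ⟨hp, hzy, hpy⟩, le_rfl⟩

theorem LtOrReversed.not_transGen_self (hcyc : ∀ q, ¬ TransGen (AlternatingStep T) q q) (x : α) :
    ¬ TransGen (LtOrReversed T) x x := fun hx => by
  rcases LtOrReversed.lt_or_exists_of_transGen hx with hlt | ⟨p, hp, q, hq, hxq, hqp, hpx⟩
  · exact lt_irrefl x hlt
  · exact hcyc q (TransGen.tail' hqp ⟨hp, hq, hpx.trans hxq⟩)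

theorem reversible_of_forall_not_transGen_alternatingStep (hT : ∀ p ∈ T, p.1 ≠ p.2)
    (hcyc : ∀ q, ¬ TransGen (AlternatingStep T) q q) : Reversible T := by
  have : IsPartialOrder α (ReflTransGen (LtOrReversed T)) :=
    { antisymm := fun x y hxy hyx => by
        rcases reflTransGen_iff_eq_or_transGen.1 hxy with rfl | hxy
        · rfl
        rcases reflTransGen_iff_eq_or_transGen.1 hyx with rfl | hyx
        · rfl
        exact (LtOrReversed.not_transGen_self hcyc x (hxy.trans hyx)).elim }
  obtain ⟨s, hs, hle⟩ := extend_partialOrder (ReflTransGen (LtOrReversed T))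
  have hext : ∀ x y : α, x ≤ y → s x y := fun x y hxy => by
    rcases hxy.lt_or_eq with hlt | rfl
    · exact hle _ _ (.single (.inl hlt))
    · exact hle _ _ .refl
  refine ⟨s, ⟨hs, hext⟩, fun p hp => ?_⟩
  have hrev : s p.2 p.1 := hle _ _ (.single (.inr hp))
  exact ⟨hrev, fun hfwd => hT p hp (antisymm hfwd hrev)⟩

theorem ReversibleOn.not_transGen_alternatingStep {Q : Set α} (hU : ∀ p ∈ U, p.1 ∈ Q ∧ p.2 ∈ Q)
    (hrev : ReversibleOn Q U) (q : α × α) : ¬ TransGen (AlternatingStep U) q q := by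
  obtain ⟨r, ⟨hr, hr_ext⟩, hr_rev⟩ := hrev
  let lt : α → α → Prop := fun x y =>
    ∃ (hx : x ∈ Q) (hy : y ∈ Q), r ⟨x, hx⟩ ⟨y, hy⟩ ∧ ¬ r ⟨y, hy⟩ ⟨x, hx⟩
  have : IsTrans α lt := ⟨fun x y z ⟨hx, hy, hxy, hyx⟩ ⟨_, hz, hyz, hzy⟩ =>
    ⟨hx, hz, _root_.trans hxy hyz, fun hzx => hyx (_root_.trans hyz hzx)⟩⟩
  -- `b <_r a ≤ b'` forces `b <_r b'`
  have hstep : ∀ p p', AlternatingStep U p p' → lt p.2 p'.2 := by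
    rintro p p' ⟨hp, hp', hle⟩
    obtain ⟨ha, hb⟩ := hU p hp
    have hb' := (hU p' hp').2
    obtain ⟨hba, hab⟩ := hr_rev (⟨p.1, ha⟩, ⟨p.2, hb⟩) hp
    have hab' : r ⟨p.1, ha⟩ ⟨p'.2, hb'⟩ := hr_ext _ _ hle
    exact ⟨hb, hb', _root_.trans hba hab', fun h => hab (_root_.trans hab' h)⟩
  intro hq
  have hlt : lt q.2 q.2 := by
    simpa only [transGen_eq_self] using hq.lift (p := lt) Prod.snd hstep
  obtain ⟨_, _, hxx, hnxx⟩ := hlt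
  exact hnxx hxx

end AlternatingCycles

theorem Relation.TransGen.restrict_level {β γ : Type*} [PartialOrder γ] {r : β → β → Prop}
    {f : β → γ} (hf : ∀ a b, r a b → f a ≤ f b) {a b : β} (hab : TransGen r a b)
    (hba : f b ≤ f a) : TransGen (fun x y => r x y ∧ f x = f a ∧ f y = f a) a b := by
  induction hab with
  | single h => exact .single ⟨h, rfl, le_antisymm hba (hf _ _ h)⟩
  | @tail c d hac hcd ih =>
    have hac' : f a ≤ f c := by
      simpa only [transGen_eq_self] using hac.lift (p := (· ≤ ·)) f hf
    have hc : f c = f a := le_antisymm ((hf _ _ hcd).trans hba) hac'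
    have hd : f d = f a := le_antisymm hba (hc ▸ hf _ _ hcd)
    exact .tail (ih hc.le) ⟨hcd, hc, hd⟩

section ChainIndices

variable [PartialOrder α] {h : ℕ} {c : Fin h → α}

theorem dnN_apply (hc : StrictMono c) (j : Fin h) : dnN c (c j) = j + 1 := by
  have : {i | c i ≤ c j} = (Finset.Iic j : Set (Fin h)) := by
    ext i; simp [hc.le_iff_le]
  rw [dnN, this, Set.ncard_coe_finset, Fin.card_Iic]

theorem upN_apply (hc : StrictMono c) (j : Fin h) : upN c (c j) = j + 1 := by
  have : {i | c j ≤ c i} = (Finset.Ici j : Set (Fin h)) := by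
    ext i; simp [hc.le_iff_le]
  rw [upN, this, Set.ncard_coe_finset, Fin.card_Ici]
  omega

theorem not_mem_range_of_dnN_lt_upN (hc : StrictMono c) {z : α} (hz : dnN c z < upN c z) :
    z ∉ Set.range c := by
  rintro ⟨j, rfl⟩
  rw [dnN_apply hc, upN_apply hc] at hz
  exact lt_irrefl _ hz

theorem Dangerous.mem_Ar (hc : StrictMono c) {p : α × α} (hp : Dangerous c p) :
    p.1 ∈ Ar c (dnN c p.2) ∧ p.2 ∈ Ar c (dnN c p.2) := by
  obtain ⟨hdn, hdnup, hup⟩ := hp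
  exact ⟨⟨not_mem_range_of_dnN_lt_upN hc (hdn.trans hdnup), hdn.le, hdnup⟩,
    ⟨not_mem_range_of_dnN_lt_upN hc (hdnup.trans hup), le_rfl, hdnup.trans hup⟩⟩

end ChainIndices

theorem realizerOn_of_forall_reversible [PartialOrder α] {d : ℕ} {S : Set (α × α)}
    (f : α × α → Fin d) (hS : ∀ k, Reversible {p ∈ S | f p = k}) : RealizerOn d S := by
  choose L hL hrev using hS
  exact ⟨L, hL, fun p hp => ⟨f p, hrev (f p) p ⟨hp, rfl⟩⟩⟩

section LeftSafe

variable [PartialOrder α] {h : ℕ} {c : Fin h → α} {S : Set (α × α)}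

def LeftSafe (c : Fin h → α) (S : Set (α × α)) (p : α × α) : Prop :=
  ∀ b' ∈ Prod.snd '' S, p.1 ≤ b' → ¬ dnN c b' < dnN c p.2

theorem LeftSafe.dnN_le {p q : α × α} (hp : LeftSafe c S p) (hq : q ∈ S) (hle : p.1 ≤ q.2) :
    dnN c p.2 ≤ dnN c q.2 :=
  not_lt.1 (hp q.2 ⟨q, hq, rfl⟩ hle)

theorem reversible_leftSafe_colorClass (hc : StrictMono c) (hSinc : S ⊆ IncPairs α)
    (hSdang : ∀ p ∈ S, Dangerous c p ∧ upN c p.1 < h) {d : ℕ} (φ : ℕ → α × α → Fin d)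
    (hφ : ∀ i, 1 ≤ i → i ≤ h - 1 → ∀ γ : Fin d,
      ReversibleOn (Ar c i) {p | p ∈ IncPairs α ∧ p.1 ∈ Ar c i ∧ p.2 ∈ Ar c i ∧ φ i p = γ})
    (γ : Fin d) :
    Reversible {p ∈ {p ∈ S | LeftSafe c S p} | φ (dnN c p.2) p = γ} := by
  set T := {p ∈ {p ∈ S | LeftSafe c S p} | φ (dnN c p.2) p = γ}
  refine reversible_of_forall_not_transGen_alternatingStep
    (fun p hp heq => (hSinc hp.1.1).1 (heq ▸ le_rfl)) fun q hq => ?_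
  have hmono : ∀ p p', AlternatingStep T p p' → dnN c p.2 ≤ dnN c p'.2 :=
    fun p p' ⟨hp, hp', hle⟩ => hp.1.2.dnN_le hp'.1.1 hle
  obtain ⟨_, ⟨⟨⟨hqS, _⟩, _⟩, _⟩, _⟩ := TransGen.head'_iff.1 hq
  obtain ⟨⟨hdn, hdnup, _⟩, hup⟩ := hSdang q hqS
  set i := dnN c q.2
  set U := {p | p ∈ IncPairs α ∧ p.1 ∈ Ar c i ∧ p.2 ∈ Ar c i ∧ φ i p = γ}
  have hmem : ∀ p ∈ T, dnN c p.2 = i → p ∈ U := fun p ⟨⟨hpS, _⟩, hcol⟩ hpi => by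
    have hAr := Dangerous.mem_Ar hc (hSdang p hpS).1
    rw [hpi] at hAr hcol
    exact ⟨hSinc hpS, hAr.1, hAr.2, hcol⟩
  -- the cycle stays at level `i`, so it is an alternating cycle of `U`
  have hlevel : ∀ p p', AlternatingStep T p p' ∧ dnN c p.2 = i ∧ dnN c p'.2 = i →
      AlternatingStep U p p' :=
    fun p p' ⟨⟨hp, hp', hle⟩, hpi, hp'i⟩ => ⟨hmem p hp hpi, hmem p' hp' hp'i, hle⟩
  exact (hφ i (by omega) (by omega) γ).not_transGen_alternatingStep
    (fun p hp => ⟨hp.2.1, hp.2.2.1⟩) q (TransGen.mono hlevel _ _ (hq.restrict_level hmono le_rfl))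

end LeftSafe

theorem left_safe_dim_le_general {α : Type*} [PartialOrder α]
    (c : Fin (pheight α) → α) (hc : StrictMono c)
    (d1 : ℕ) (S : Set (α × α)) (hSinc : S ⊆ IncPairs α)
    (hSdang : ∀ p ∈ S, Dangerous c p ∧ 1 < dnN c p.2 ∧ upN c p.1 < pheight α)
    (φ : ℕ → α × α → Fin d1)
    (hφ : ∀ i, 1 ≤ i → i ≤ pheight α - 1 → ∀ γ : Fin d1,
      ReversibleOn (Ar c i)
        {p | p ∈ IncPairs α ∧ p.1 ∈ Ar c i ∧ p.2 ∈ Ar c i ∧ φ i p = γ}) :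
    RealizerOn d1
      {p ∈ S | ∀ b' ∈ Prod.snd '' S, p.1 ≤ b' → ¬ dnN c b' < dnN c p.2} :=
  realizerOn_of_forall_reversible (fun p => φ (dnN c p.2) p) <|
    reversible_leftSafe_colorClass hc hSinc
      (fun p hp => ⟨(hSdang p hp).1, (hSdang p hp).2.2⟩) φ hφ

/-- The left-safe pairs of a set `S` of dangerous pairs can be reversed with `d_1`
linear extensions, given colorings of `Inc(Ar(i, i+1))` into `d_1` reversible classes. -/
theorem left_safe_dim_le {α : Type*} [PartialOrder α] [Fintype α]
    (c : Fin (pheight α) → α) (hc : StrictMono c)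
    (d1 : ℕ) (S : Set (α × α)) (hSinc : S ⊆ IncPairs α)
    (hSdang : ∀ p ∈ S, Dangerous c p ∧ 1 < dnN c p.2 ∧ upN c p.1 < pheight α)
    (φ : ℕ → α × α → Fin d1)
    (hφ : ∀ i, 1 ≤ i → i ≤ pheight α - 1 → ∀ γ : Fin d1,
      ReversibleOn (Ar c i)
        {p | p ∈ IncPairs α ∧ p.1 ∈ Ar c i ∧ p.2 ∈ Ar c i ∧ φ i p = γ}) :
    RealizerOn d1
      {p ∈ S | ∀ b' ∈ Prod.snd '' S, p.1 ≤ b' → ¬ dnN c b' < dnN c p.2} :=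
  left_safe_dim_le_general c hc d1 S hSinc hSdang φ hφ
end

section
/- Let P be a finite poset whose cover graph has a fixed plane drawing, and let C be a chain of P containing, for each comparable pair (x,y) with x ≤ y, all elements of C between x and y. Then there is a function assigning to each pair (x,y) with x ≤ y in P a witnessing path W(x,y) in the cover graph (a path x = u_0 < u_1 < … < u_r = y where each u_{i+1} covers u_i) such that: (1) if x ≤ c ≤ y in P and c ∈ C, then W(x,y) passes through c; and (2) if x_1 ≤ x_2 ≤ y_2 ≤ y_1 in P and W(x_1,y_1) passes through both x_2 and y_2, then W(x_2,y_2) equals the subpath of W(x_1,y_1) from x_2 to y_2. -/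
/-!
For `x ≤ y`, let `W x y` be a witnessing path through all points of `C ∩ [x, y]` of least weight
`∑ 2 ^ e v` over its vertices `v`, for a fixed injection `e : α → ℕ`; this weight takes the place
of the lexicographic order. It is additive under concatenation, and it determines the vertex set,
hence the path, since witnessing paths are strictly increasing. Such paths exist because `C` is a
chain: from `x`, step up along a cover lying below the least point of `C` in `(x, y]`.

If `W x y` passes through `x₂ ≤ y₂`, its segment `s` from `x₂` to `y₂` is admissible for
`(x₂, y₂)`, and splicing `W x₂ y₂` in place of `s` gives an admissible path for `(x, y)`.
Minimality of both paths forces `W x₂ y₂` and `s` to have equal weights, so they are equal.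
-/

variable {α : Type*}

/-- A witnessing path for `x ≤ y`: a nonempty list starting at `x`, ending at `y`,
each element covered by the next. -/
def IsWitnessPath [PartialOrder α] (x y : α) (l : List α) : Prop :=
  l ≠ [] ∧ l.head? = some x ∧ l.getLast? = some y ∧ l.Chain' (· ⋖ ·)

open List

theorem List.IsChain.append_append_of_head?_getLast?_eq {β : Type*} {R : β → β → Prop}
    {A s s' B : List β} (h : IsChain R (A ++ s ++ B)) (hs' : IsChain R s')
    (hhead : s'.head? = s.head?) (hlast : s'.getLast? = s.getLast?) :
    IsChain R (A ++ s' ++ B) := by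
  simp only [isChain_append, getLast?_append, hhead, hlast] at h ⊢
  exact ⟨⟨h.1.1, hs', h.1.2.2⟩, h.2⟩

namespace IsWitnessPath

variable {α : Type*} [PartialOrder α] {x y z x₂ y₂ c : α} {l s s' A B : List α}

theorem singleton (x : α) : IsWitnessPath x x [x] :=
  ⟨cons_ne_nil x [], rfl, rfl, isChain_singleton x⟩

theorem cons (hxz : x ⋖ z) (h : IsWitnessPath z y l) : IsWitnessPath x y (x :: l) := by
  obtain ⟨-, hhead, hlast, hchain⟩ := h
  rw [eq_cons_of_mem_head? hhead] at hchain hlast ⊢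
  exact ⟨cons_ne_nil _ _, rfl, by rwa [getLast?_cons_cons], isChain_cons_cons.mpr ⟨hxz, hchain⟩⟩

theorem pairwise_lt (h : IsWitnessPath x y l) : l.Pairwise (· < ·) :=
  isChain_iff_pairwise.mp (h.2.2.2.imp fun _ _ hab => hab.lt)

theorem mem_Icc (h : IsWitnessPath x y l) (hc : c ∈ l) : c ∈ Set.Icc x y := by
  have hle : l.Pairwise (· ≤ ·) := h.pairwise_lt.imp le_of_lt
  have hx : l.head (ne_nil_of_mem hc) = x :=
    Option.some.inj ((head?_eq_some_head _).symm.trans h.2.1)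
  have hy : l.getLast (ne_nil_of_mem hc) = y :=
    Option.some.inj ((getLast?_eq_some_getLast _).symm.trans h.2.2.1)
  exact ⟨hx ▸ hle.rel_head hc, hy ▸ hle.rel_getLast hc⟩

theorem splice (h : IsWitnessPath x y (A ++ s ++ B)) (hs : IsWitnessPath x₂ y₂ s)
    (hs' : IsWitnessPath x₂ y₂ s') : IsWitnessPath x y (A ++ s' ++ B) := by
  have hhead : s'.head? = s.head? := hs'.2.1.trans hs.2.1.symm
  have hlast : s'.getLast? = s.getLast? := hs'.2.2.1.trans hs.2.2.1.symm
  refine ⟨by simp [hs'.1], ?_, ?_,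
    h.2.2.2.append_append_of_head?_getLast?_eq hs'.2.2.2 hhead hlast⟩
  · simpa only [head?_append, hhead] using h.2.1
  · simpa only [getLast?_append, hlast] using h.2.2.1

theorem exists_eq_append_append (h : IsWitnessPath x y l) (hx₂ : x₂ ∈ l) (hy₂ : y₂ ∈ l)
    (hxy₂ : x₂ ≤ y₂) : ∃ A s B, l = A ++ s ++ B ∧ IsWitnessPath x₂ y₂ s := by
  obtain ⟨A, R, rfl⟩ := append_of_mem hx₂
  have hy₂R : y₂ ∈ x₂ :: R := by
    refine (mem_append.mp hy₂).resolve_left fun hy₂A => ?_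
    exact (pairwise_append.mp h.pairwise_lt).2.2 y₂ hy₂A x₂ mem_cons_self |>.not_ge hxy₂
  obtain ⟨D, B, hDB⟩ := append_of_mem hy₂R
  have hl : A ++ x₂ :: R = A ++ (D ++ [y₂]) ++ B := by simp [hDB]
  refine ⟨A, D ++ [y₂], B, hl, by simp, ?_, by simp, h.2.2.2.infix ⟨A, B, hl.symm⟩⟩
  have hhead := congrArg head? hDB
  simp only [head?_cons, head?_append] at hhead ⊢
  exact hhead.symm

theorem mem_of_mem_append_append (h : IsWitnessPath x y (A ++ s ++ B))
    (hs : IsWitnessPath x₂ y₂ s) (hc : c ∈ A ++ s ++ B) (hx₂c : x₂ ≤ c) (hcy₂ : c ≤ y₂) :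
    c ∈ s := by
  have hx₂s : x₂ ∈ s := mem_of_mem_head? hs.2.1
  have hy₂s : y₂ ∈ s := mem_of_mem_getLast? hs.2.2.1
  obtain ⟨hAs, -, hAsB⟩ := pairwise_append.mp h.pairwise_lt
  rcases mem_append.mp hc with hc | hcB
  · rcases mem_append.mp hc with hcA | hcs
    · exact absurd hx₂c ((pairwise_append.mp hAs).2.2 c hcA x₂ hx₂s).not_ge
    · exact hcs
  · exact absurd hcy₂ (hAsB y₂ (mem_append_right A hy₂s) c hcB).not_ge

end IsWitnessPath

section Weight

variable {α : Type*}

def pathWeight (e : α → ℕ) (l : List α) : ℕ := (l.map fun a => 2 ^ e a).sum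

@[simp]
theorem pathWeight_append (e : α → ℕ) (l₁ l₂ : List α) :
    pathWeight e (l₁ ++ l₂) = pathWeight e l₁ + pathWeight e l₂ := by
  simp [pathWeight]

theorem eq_of_pathWeight_eq [Preorder α] {e : α → ℕ} (he : Function.Injective e)
    {l₁ l₂ : List α} (h₁ : l₁.Pairwise (· < ·)) (h₂ : l₂.Pairwise (· < ·))
    (h : pathWeight e l₁ = pathWeight e l₂) : l₁ = l₂ := by
  classical
  have hsum (l : List α) (hl : l.Nodup) :
      pathWeight e l = ∑ i ∈ l.toFinset.map ⟨e, he⟩, 2 ^ i := by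
    rw [Finset.sum_map, List.sum_toFinset _ hl]
    rfl
  have hset := Finset.geomSum_injective le_rfl
    ((hsum l₁ h₁.nodup).symm.trans (h.trans (hsum l₂ h₂.nodup)))
  have hperm := perm_of_nodup_nodup_toFinset_eq h₁.nodup h₂.nodup (Finset.map_injective _ hset)
  exact hperm.eq_of_pairwise (fun _ _ _ _ hab hba => (hab.asymm hba).elim) h₁ h₂

end Weight

section Through

variable {α : Type*} [PartialOrder α] {C : Set α} {x y x₂ y₂ : α} {L S : List α}

theorem IsChain.exists_covBy_le_forall_le [WellFoundedLT α] (hC : IsChain (· ≤ ·) C)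
    (hxy : x < y) : ∃ z, x ⋖ z ∧ z ≤ y ∧ ∀ c ∈ C, x < c → c ≤ y → z ≤ c := by
  obtain ⟨b, hxb, hby, hb⟩ : ∃ b, x < b ∧ b ≤ y ∧ ∀ c ∈ C, x < c → c ≤ y → b ≤ c := by
    by_cases hS : ∃ c, c ∈ C ∧ x < c ∧ c ≤ y
    · obtain ⟨b, ⟨hbC, hxb, hby⟩, hmin⟩ := wellFounded_lt.has_min _ hS
      refine ⟨b, hxb, hby, fun c hc hxc hcy => ?_⟩
      rcases hC.total hbC hc with hbc | hcb
      · exact hbc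
      · exact (eq_of_le_of_not_lt hcb (hmin c ⟨hc, hxc, hcy⟩)).ge
    · exact ⟨y, hxy, le_rfl, fun c hc hxc hcy => (hS ⟨c, hc, hxc, hcy⟩).elim⟩
  obtain ⟨z, hxz, hzb⟩ := exists_covBy_le_of_lt hxb
  exact ⟨z, hxz, hzb.trans hby, fun c hc hxc hcy => hzb.trans (hb c hc hxc hcy)⟩

structure IsWitnessPathThrough (C : Set α) (x y : α) (l : List α) : Prop where
  isWitnessPath : IsWitnessPath x y l
  mem : ∀ c ∈ C, x ≤ c → c ≤ y → c ∈ l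

theorem exists_isWitnessPathThrough [WellFoundedLT α] [WellFoundedGT α]
    (hC : IsChain (· ≤ ·) C) (hxy : x ≤ y) : ∃ l, IsWitnessPathThrough C x y l := by
  induction x using WellFoundedGT.induction with
  | _ x ih =>
  rcases hxy.eq_or_lt with rfl | hxy
  · exact ⟨[x], .singleton x, fun c _ hxc hcx => by simp [le_antisymm hcx hxc]⟩
  · obtain ⟨z, hxz, hzy, hz⟩ := hC.exists_covBy_le_forall_le hxy
    obtain ⟨l, hl⟩ := ih z hxz.lt hzy
    refine ⟨x :: l, hl.isWitnessPath.cons hxz, fun c hc hxc hcy => ?_⟩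
    rcases hxc.eq_or_lt with rfl | hxc
    · exact mem_cons_self
    · exact mem_cons_of_mem x (hl.mem c hc (hz c hc hxc hcy) hcy)

theorem MinimalFor.infix_of_isWitnessPathThrough {e : α → ℕ} (he : Function.Injective e)
    (hL : MinimalFor (IsWitnessPathThrough C x y) (pathWeight e) L)
    (hS : MinimalFor (IsWitnessPathThrough C x₂ y₂) (pathWeight e) S)
    (hx₂ : x₂ ∈ L) (hy₂ : y₂ ∈ L) (hxy₂ : x₂ ≤ y₂) : S <:+: L := by
  have hLw := hL.prop.isWitnessPath
  obtain ⟨A, s, B, rfl, hs⟩ := hLw.exists_eq_append_append hx₂ hy₂ hxy₂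
  have hsC : IsWitnessPathThrough C x₂ y₂ s := ⟨hs, fun c hc hx₂c hcy₂ =>
    hLw.mem_of_mem_append_append hs (hL.prop.mem c hc ((hLw.mem_Icc hx₂).1.trans hx₂c)
      (hcy₂.trans (hLw.mem_Icc hy₂).2)) hx₂c hcy₂⟩
  have hNC : IsWitnessPathThrough C x y (A ++ S ++ B) := by
    refine ⟨hLw.splice hs hS.prop.isWitnessPath, fun c hc hxc hcy => ?_⟩
    have hcL := hL.prop.mem c hc hxc hcy
    simp only [mem_append] at hcL ⊢
    rcases hcL with (hcA | hcs) | hcB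
    · exact .inl (.inl hcA)
    · exact .inl (.inr (hS.prop.mem c hc (hs.mem_Icc hcs).1 (hs.mem_Icc hcs).2))
    · exact .inr hcB
  have hS_le_s : pathWeight e S ≤ pathWeight e s := hS.le hsC
  have hs_le_S : pathWeight e (A ++ s ++ B) ≤ pathWeight e (A ++ S ++ B) := hL.le hNC
  simp only [pathWeight_append] at hs_le_S
  obtain rfl : S = s := eq_of_pathWeight_eq he hS.prop.isWitnessPath.pairwise_lt hs.pairwise_lt
    (by omega)
  exact ⟨A, B, rfl⟩

end Through

/-- There is a consistent choice of witnessing paths: each `W(x, y)` passes through all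
chain elements between `x` and `y`, and whenever `x ≤ x₂ ≤ y₂ ≤ y` and `W(x, y)` passes
through `x₂` and `y₂`, the path `W(x₂, y₂)` is the corresponding subpath of `W(x, y)`. -/
theorem exists_consistent_witnessing_paths {α : Type*} [PartialOrder α] [Fintype α]
    (C : Set α) (hC : IsChain (· ≤ ·) C) :
    ∃ W : α → α → List α,
      ∀ x y : α, x ≤ y →
        IsWitnessPath x y (W x y) ∧
        (∀ c ∈ C, x ≤ c → c ≤ y → c ∈ W x y) ∧
        (∀ x2 y2 : α, x ≤ x2 → x2 ≤ y2 → y2 ≤ y →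
          x2 ∈ W x y → y2 ∈ W x y → (W x2 y2).IsInfix (W x y)) := by
  obtain ⟨e, he⟩ := exists_injective_nat α
  have hmin (x y : α) (hxy : x ≤ y) :
      ∃ l, MinimalFor (IsWitnessPathThrough C x y) (pathWeight e) l :=
    exists_minimalFor_of_wellFoundedLT _ _ (exists_isWitnessPathThrough hC hxy)
  choose! W hW using hmin
  refine ⟨W, fun x y hxy => ⟨(hW x y hxy).prop.isWitnessPath, (hW x y hxy).prop.mem, ?_⟩⟩
  intro x₂ y₂ _ hxy₂ _ hx₂ hy₂
  exact (hW x y hxy).infix_of_isWitnessPathThrough he (hW x₂ y₂ hxy₂) hx₂ hy₂ hxy₂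
end

section
/- Let P be a finite poset with maximum chain C = {c_1 < … < c_h}, let S be a set of incomparable pairs (a,b) of P with c_1 < dn(b) and up(a) < c_h, where for a comparable pair (a,b) with a ∈ A(S), b ∈ B(S), a ≤ b, the pair is called strong if up(a) ≤ dn(b) in P and weak otherwise. Then for every strict alternating cycle {(a_α,b_α)}_{α=1}^s in S (s ≥ 2), there is at most one index α such that (a_α, b_{α+1}) is a strong comparable pair. -/
variable {α : Type*}

/-!
A strong link `a ≤ c_k ≤ b` factors through the chain. So if the links at `i` and `j` are both
strong and `up(a_i) ≤ up(a_j)`, then `a_i ≤ c_{up(a_j)} ≤ b_{j+1}`, and strictness of the cycle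
forces `j + 1 ≡ i + 1`.
-/

/-- The index sets `{k | z ≤ c k}` and `{k | c k ≤ w}` have more than `h` elements in total,
so they meet. -/
lemma le_of_upN_le_dnN [PartialOrder α] {h : ℕ} (c : Fin h → α) {z w : α}
    (hzw : upN c z ≤ dnN c w) : z ≤ w := by
  obtain ⟨k, hzk, hkw⟩ : ({k | z ≤ c k} ∩ {k | c k ≤ w} : Set (Fin h)).Nonempty := by
    refine Set.nonempty_of_ncard_ne_zero fun hempty => ?_
    have hsum := Set.ncard_union_add_ncard_inter {k | z ≤ c k} {k | c k ≤ w}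
    have hunion := Set.ncard_le_card ({k | z ≤ c k} ∪ {k | c k ≤ w} : Set (Fin h))
    rw [Nat.card_fin] at hunion
    unfold upN dnN at hzw
    omega
  exact hzk.trans hkw

lemma Nat.eq_of_add_one_mod_eq {s i j : ℕ} (hi : i < s) (hj : j < s)
    (h : (i + 1) % s = (j + 1) % s) : i = j :=
  (Nat.ModEq.add_right_cancel' 1 h).eq_of_lt_of_lt hi hj

lemma IsStrictAltCycle.eq_of_upN_le_of_upN_le_dnN [PartialOrder α] {h : ℕ} {c : Fin h → α}
    {S : Set (α × α)} {s : ℕ} {x y : ℕ → α} (hcyc : IsStrictAltCycle S s x y) {i j : ℕ}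
    (hi : i < s) (hj : j < s) (hij : upN c (x i) ≤ upN c (x j))
    (hstrong : upN c (x j) ≤ dnN c (y ((j + 1) % s))) : i = j := by
  have hs : 0 < s := by have := hcyc.1.1; omega
  have hxy : x i ≤ y ((j + 1) % s) := le_of_upN_le_dnN c (hij.trans hstrong)
  exact Nat.eq_of_add_one_mod_eq hi hj (hcyc.2 i hi _ (Nat.mod_lt _ hs) hxy).symm

theorem at_most_one_strong_link_general {α : Type*} [PartialOrder α]
    (c : Fin (pheight α) → α)
    (S : Set (α × α))
    (s : ℕ) (x y : ℕ → α) (hcyc : IsStrictAltCycle S s x y) :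
    ∀ i < s, ∀ j < s,
      upN c (x i) ≤ dnN c (y ((i + 1) % s)) →
      upN c (x j) ≤ dnN c (y ((j + 1) % s)) → i = j := by
  intro i hi j hj hstrong_i hstrong_j
  rcases le_total (upN c (x i)) (upN c (x j)) with hle | hle
  · exact hcyc.eq_of_upN_le_of_upN_le_dnN hi hj hle hstrong_j
  · exact (hcyc.eq_of_upN_le_of_upN_le_dnN hj hi hle hstrong_i).symm

/-- In a strict alternating cycle of pairs as in the opposite-side analysis, at most one
link `(a_α, b_{α+1})` is a strong comparable pair (`up(a_α) ≤ dn(b_{α+1})`). -/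
theorem at_most_one_strong_link {α : Type*} [PartialOrder α] [Fintype α]
    (c : Fin (pheight α) → α) (hc : StrictMono c)
    (S : Set (α × α)) (hSinc : S ⊆ IncPairs α)
    (hS : ∀ p ∈ S, 1 < dnN c p.2 ∧ upN c p.1 < pheight α)
    (s : ℕ) (x y : ℕ → α) (hcyc : IsStrictAltCycle S s x y) :
    ∀ i < s, ∀ j < s,
      upN c (x i) ≤ dnN c (y ((i + 1) % s)) →
      upN c (x j) ≤ dnN c (y ((j + 1) % s)) → i = j :=
  at_most_one_strong_link_general c S s x y hcyc
end
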